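/- Let C be a category with all limits and finite colimits, such that cofiltered limits commute with finite colimits in C, and let X be a profinite space. Then the cosheafification functor PCoSh(X,C) → CoSh(X,C) is exact: it preserves all limits (being a right adjoint) and also preserves finite colimits. -/

import Mathlib

open CategoryTheory CategoryTheory.Limits TopologicalSpace

attribute [local instance] CategoryTheory.ConcreteCategory.instFunLike

universe w' w v u v₂ u₂ v₁ u₁

namespace ProfiniteCosheaves

variable {C : Type u₂} [Category.{v₂} C]

/-- The canonical binary cofan `A(U) → A(U ⊔ V) ← A(V)` of a precosheaf `A` at a pair of
clopen subsets. -/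
def cosheafCofan {X : Type*} [TopologicalSpace X] (A : Clopens X ⥤ C) (U V : Clopens X) :
    BinaryCofan (A.obj U) (A.obj V) :=
  BinaryCofan.mk (A.map (homOfLE le_sup_left : U ⟶ U ⊔ V)) (A.map (homOfLE le_sup_right))

/-- A precosheaf (a functor on the poset of clopen subsets) is a cosheaf if its value at `∅`
is initial and, for disjoint clopens `U, V`, the canonical cofan exhibits `A(U ⊔ V)` as the
coproduct `A(U) ⨿ A(V)`. -/
structure IsCosheaf {X : Type*} [TopologicalSpace X] (A : Clopens X ⥤ C) : Prop where
  initial : Nonempty (IsInitial (A.obj ⊥))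
  binary : ∀ U V : Clopens X, Disjoint U V → Nonempty (IsColimit (cosheafCofan A U V))

/-- The category `CoSh(X, C)` of cosheaves over a profinite space `X` valued in `C`. -/
def CoSheaf (X : Profinite.{u}) (C : Type u₂) [Category.{v₂} C] :=
  ObjectProperty.FullSubcategory (fun A : Clopens X ⥤ C => IsCosheaf A)

instance (X : Profinite.{u}) : Category (CoSheaf X C) := ObjectProperty.FullSubcategory.category _

/-- Preimage of clopen subsets along a continuous map, as a functor. -/
def clopensComap {X Y : Profinite.{u}} (f : X ⟶ Y) : Clopens Y ⥤ Clopens X where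
  obj U := ⟨f ⁻¹' (U : Set Y), U.isClopen.preimage f.hom.hom.continuous⟩
  map {U V} h := homOfLE (fun x hx => leOfHom h hx)

theorem IsCosheaf.comap {X Y : Profinite.{u}} (f : X ⟶ Y) {A : Clopens X ⥤ C}
    (hA : IsCosheaf A) : IsCosheaf (clopensComap f ⋙ A) := by
  constructor
  · have e : (clopensComap f).obj ⊥ = ⊥ := by
      apply SetLike.ext'
      simp [clopensComap]
    exact ⟨hA.initial.some.ofIso (A.mapIso (eqToIso e.symm))⟩
  · intro U V hUV
    have hUV' : Disjoint ((clopensComap f).obj U) ((clopensComap f).obj V) := by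
      rw [disjoint_iff] at hUV ⊢
      have h0 : (U : Set (Y : Type u)) ∩ (V : Set (Y : Type u)) = ∅ := by
        have := congrArg (fun W : Clopens (Y : Type u) => (W : Set (Y : Type u))) hUV
        simpa using this
      apply SetLike.ext'
      exact Set.preimage_inter.symm.trans ((congrArg _ h0).trans Set.preimage_empty)
    obtain ⟨h⟩ := hA.binary _ _ hUV'
    have e : (clopensComap f).obj U ⊔ (clopensComap f).obj V = (clopensComap f).obj (U ⊔ V) := by
      apply SetLike.ext'
      exact Set.preimage_union.symm
    refine ⟨h.ofIsoColimit (Cocones.ext (A.mapIso (eqToIso e)) ?_)⟩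
    rintro ⟨⟨⟩⟩ <;>
      · dsimp [cosheafCofan]
        exact (A.map_comp _ _).symm.trans (congrArg A.map (Subsingleton.elim _ _))

/-- The direct image functor `f_* : CoSh(X, C) ⥤ CoSh(Y, C)`, `A ↦ A ∘ f⁻¹`. -/
def coshMapFun {X Y : Profinite.{u}} (f : X ⟶ Y) : CoSheaf X C ⥤ CoSheaf Y C :=
  ObjectProperty.lift _
    (ObjectProperty.ι _ ⋙ (Functor.whiskeringLeft (Clopens Y) (Clopens X) C).obj (clopensComap f))
    (fun A => A.property.comap f)

/-- The functor `Profinite ⥤ Cat` sending `X` to the category of cosheaves on `X` valued in `C`,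
and a continuous map to the direct image functor. -/
def coshFunctor (C : Type u₂) [Category.{v₂} C] : Profinite.{u} ⥤ Cat where
  obj X := Cat.of (CoSheaf X C)
  map f := (coshMapFun f).toCatHom
  map_id _ := rfl
  map_comp _ _ := rfl

/-- The total category `CoSh(C)` of profinite cosheaves valued in `C`, i.e. the Grothendieck
construction of `X ↦ CoSh(X, C)`. Objects are pairs `(X, A)` with `A` a cosheaf on `X`;
a morphism `(X, A) ⟶ (Y, B)` is a pair `(f, φ)` with `f : X ⟶ Y` continuous and
`φ : A ∘ f⁻¹ ⟶ B`. -/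
def CoSh (C : Type u₂) [Category.{v₂} C] :=
  Grothendieck (coshFunctor.{u} C)

instance : Category (CoSh.{u} C) := inferInstanceAs (Category (Grothendieck _))

/-- The global cosections functor `CoSh(C) ⥤ C`, `(A, X) ↦ A(X)`. -/
def globalCosections (C : Type u₂) [Category.{v₂} C] : CoSh.{u} C ⥤ C where
  obj P := (ObjectProperty.FullSubcategory.obj (P := fun A : Clopens P.base ⥤ C => IsCosheaf A)
    P.fiber).obj ⊤
  map {P Q} g :=
    (ObjectProperty.FullSubcategory.obj (P := fun A : Clopens P.base ⥤ C => IsCosheaf A)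
      P.fiber).map (homOfLE (fun x _ => Set.mem_univ _) : (⊤ : Clopens P.base) ⟶ _) ≫
      NatTrans.app (InducedCategory.Hom.hom
        (F := ObjectProperty.FullSubcategory.obj (P := fun A : Clopens Q.base ⥤ C => IsCosheaf A))
        g.fiber) ⊤
  map_id := by
    intro X
    refine (eq_whisker (X.fiber.obj.map_id ⊤) _).trans ?_
    refine (Category.id_comp _).trans ?_
    rfl
  map_comp := by
    intro P Q R f g
    refine (eq_whisker (P.fiber.obj.map_id ⊤) _).trans ?_
    refine (Category.id_comp _).trans ?_
    refine Eq.trans ?_ (congrArg₂ (· ≫ ·) (eq_whisker (P.fiber.obj.map_id ⊤) _).symm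
      (eq_whisker (Q.fiber.obj.map_id ⊤) _).symm)
    refine Eq.trans ?_ (congrArg₂ (· ≫ ·) (Category.id_comp _).symm (Category.id_comp _).symm)
    exact Category.id_comp _

/-- The poset of clopen neighbourhoods of a point, as a category. -/
def Nbhds (X : Profinite.{u}) (x : X) := ObjectProperty.FullSubcategory (fun U : Clopens X => x ∈ U)

instance (X : Profinite.{u}) (x : X) : Category (Nbhds X x) := ObjectProperty.FullSubcategory.category _

/-- The diagram of values of `A` on the clopen neighbourhoods of `x`; the costalk of `A` at `x`
is its (inverse) limit. -/
def costalkDiagram {X : Profinite.{u}} (A : Clopens X ⥤ C) (x : X) : Nbhds X x ⥤ C :=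
  ObjectProperty.ι _ ⋙ A

/-- The costalk `A_x = lim_{V ∋ x} A(V)` of a precosheaf at a point. -/
noncomputable def costalk {X : Profinite.{u}} (A : Clopens X ⥤ C) (x : X)
    [HasLimit (costalkDiagram A x)] : C :=
  limit (costalkDiagram A x)

/-- `c` is *a* costalk of `A` at `x` if the costalk diagram of `A` at `x` admits a limit cone
whose point is isomorphic to `c`. -/
def IsCostalk {X : Profinite.{u}} (A : Clopens X ⥤ C) (x : X) (c : C) : Prop :=
  ∃ t : Cone (costalkDiagram A x), Nonempty (IsLimit t) ∧ Nonempty (t.pt ≅ c)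

/-- The pro-completion of a category: the free completion under cofiltered limits, realised
concretely as the opposite of the category of left-exact functors to `Type`. -/
def ProCompletion (E : Type u₁) [Category.{v₁} E] :=
  (ObjectProperty.FullSubcategory fun F : E ⥤ Type v₁ => Nonempty (PreservesFiniteLimits F))ᵒᵖ

instance (E : Type u₁) [Category.{v₁} E] : Category (ProCompletion E) :=
  inferInstanceAs (Category (ObjectProperty.FullSubcategory _)ᵒᵖ)

/-- The canonical (co-Yoneda) embedding of a category into its pro-completion. -/
def proEmbedding (E : Type u₁) [Category.{v₁} E] : E ⥤ ProCompletion E where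
  obj e := Opposite.op ⟨coyoneda.obj (Opposite.op e), ⟨inferInstance⟩⟩
  map {e e'} f := Quiver.Hom.op
    (show (⟨coyoneda.obj (Opposite.op e'), ⟨inferInstance⟩⟩ : ObjectProperty.FullSubcategory _) ⟶
        ⟨coyoneda.obj (Opposite.op e), ⟨inferInstance⟩⟩ from ObjectProperty.homMk (coyoneda.map f.op))

/-- A regular category: it has finite limits, coequalisers of kernel pairs, and regular
epimorphisms are stable under pullback. -/
class IsRegularCategory (C : Type u₂) [Category.{v₂} C] : Prop where
  hasFiniteLimits : HasFiniteLimits C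
  hasCoeqOfKernelPairs : ∀ {R X Y : C} (f : X ⟶ Y) (a b : R ⟶ X),
    IsPullback a b f f → HasCoequalizer a b
  regularEpi_stable : ∀ {P X Y Z : C} (f : X ⟶ Z) (g : Y ⟶ Z) (p₁ : P ⟶ X) (p₂ : P ⟶ Y),
    IsPullback p₁ p₂ f g → Nonempty (RegularEpi f) → Nonempty (RegularEpi p₂)

/-- `D` is closed under subobjects in its pro-completion: any subobject (in `Pro(D)`) of an
object of `D` is isomorphic to an object of `D`. -/
def ClosedUnderSubobjects (D : Type u) [SmallCategory D] : Prop :=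
  ∀ (d : D) (c : ProCompletion D) (m : c ⟶ (proEmbedding D).obj d), Mono m →
    ∃ d' : D, Nonempty (c ≅ (proEmbedding D).obj d')

/-- The coprojection maps into binary coproducts are monomorphisms. -/
def MonoCoprojections (C : Type u₂) [Category.{v₂} C] : Prop :=
  ∀ (a b p : C) (inl : a ⟶ p) (inr : b ⟶ p),
    Nonempty (IsColimit (BinaryCofan.mk inl inr)) → Mono inl ∧ Mono inr

/-- Cofiltered limits commute with finite colimits in `C`: for every finite category `J`,
the colimit functor `(J ⥤ C) ⥤ C` preserves cofiltered limits (of shapes of size `w`). -/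
def CofilteredLimitsCommuteWithFiniteColimits (C : Type u₂) [Category.{v₂} C]
    [HasFiniteColimits C] : Prop :=
  ∀ (J : Type) [SmallCategory J] [FinCategory J] (K : Type w) [SmallCategory K] [IsCofiltered K],
    PreservesLimitsOfShape K (colim (J := J) (C := C))

/-- The full subcategory of "finite objects" of `CoSh(Pro(D))`: cosheaves `(A, X)` with `X`
finite such that every costalk of `A` lies in (the image of) `D`. -/
def CoShFinProp (D : Type u) [SmallCategory D] (P : CoSh.{u} (ProCompletion D)) : Prop :=
  Finite (P.base : Type u) ∧
    ∀ x : P.base, ∃ d : D, IsCostalk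
      (ObjectProperty.FullSubcategory.obj
        (P := fun A : Clopens P.base ⥤ ProCompletion D => IsCosheaf A) P.fiber) x ((proEmbedding D).obj d)

/-- The category `CoSh(Pro(D))_fin` of finite cosheaf objects. -/
def CoShFin (D : Type u) [SmallCategory D] := ObjectProperty.FullSubcategory (CoShFinProp D)

instance (D : Type u) [SmallCategory D] : Category (CoShFin D) := ObjectProperty.FullSubcategory.category _

end ProfiniteCosheaves

/-!
The cosheafification of a precosheaf `A` is `U ↦ lim_P ∐_{x ∈ P} A(x)`, the limit running over
the cofiltered poset of finite clopen partitions `P` of `U`. For disjoint `U`, `V` the partitions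
of `U ⊔ V` of the form `P ∪ Q` are initial, so the cosheaf condition is the commutation of binary
coproducts with the cofiltered limit over pairs `(P, Q)`. The counit, given by the trivial
partition, is invertible at cosheaves, which makes this construction right adjoint to the
inclusion, hence isomorphic to `R`. At each `U` it is the composite of `A ↦ ∐_{x ∈ P} A(x)`,
which preserves all colimits, with a cofiltered limit, which preserves finite colimits because
these commute with cofiltered limits in `C`.
-/

namespace CategoryTheory.Limits

variable {C : Type*} [Category C] {J K : Type*} [Category J] [Category K]

theorem preservesColimitsOfShape_lim_of_preservesLimitsOfShape_colim
    [HasLimitsOfShape K C] [HasColimitsOfShape J C]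
    [PreservesLimitsOfShape K (colim : (J ⥤ C) ⥤ C)] :
    PreservesColimitsOfShape J (lim : (K ⥤ C) ⥤ C) := by
  refine ⟨fun {G} ↦ ?_⟩
  have h : colimit.post G lim =
      (HasColimit.isoOfNatIso (limitFlipIsoCompLim G)).inv ≫ (colimitLimitIso G.flip).hom := by
    refine colimit.hom_ext fun j ↦ limit.hom_ext fun k ↦ ?_
    simp only [Functor.comp_obj, lim_obj, colimit.ι_post, lim_map, limMap_π, limitFlipIsoCompLim,
      HasColimit.isoOfNatIso_ι_inv_assoc, NatIso.ofComponents_inv_app, Iso.trans_inv,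
      Category.assoc]
    -- `colimitLimitIso G.flip` lands in `limit (colimit G.flip.flip)`, and `G.flip.flip` is `G`
    -- only up to unfolding `Functor.flip`
    erw [ι_colimitLimitIso_limit_π]
    simp only [Functor.flip_obj_obj, limitObjIsoLimitCompEvaluation_inv_π_app_assoc,
      HasLimit.isoOfNatIso_inv_π_assoc, Functor.comp_obj, evaluation_obj_obj,
      flipCompEvaluation_inv_app, Category.id_comp]
    rfl
  have : IsIso (colimit.post G lim) := by rw [h]; infer_instance
  exact preservesColimit_of_isIso_post lim G

end CategoryTheory.Limits

namespace Finpartition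

variable {α : Type*} [DistribLattice α] [OrderBot α] {a b c : α}

def Refines (P : Finpartition a) (Q : Finpartition b) : Prop :=
  ∀ ⦃x⦄, x ∈ P.parts → ∃ y ∈ Q.parts, x ≤ y

theorem refines_of_le {P Q : Finpartition a} (h : P ≤ Q) : P.Refines Q := h

theorem Refines.trans {P : Finpartition a} {Q : Finpartition b} {R : Finpartition c}
    (hPQ : P.Refines Q) (hQR : Q.Refines R) : P.Refines R := fun x hx ↦ by
  obtain ⟨y, hy, hxy⟩ := hPQ hx
  obtain ⟨z, hz, hyz⟩ := hQR hy
  exact ⟨z, hz, hxy.trans hyz⟩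

theorem Refines.le {P : Finpartition a} {Q : Finpartition b} (h : P.Refines Q) : a ≤ b := by
  rw [← P.sup_parts, Finset.sup_le_iff]
  intro x hx
  obtain ⟨y, hy, hxy⟩ := h hx
  exact hxy.trans (Q.le hy)

theorem refines_of_mem_parts {Q : Finpartition b} {x : α} (hx : x ∈ Q.parts)
    (P : Finpartition x) : P.Refines Q :=
  fun _ hy ↦ ⟨x, hx, P.le hy⟩

theorem eq_of_le_of_le (Q : Finpartition b) {x y y' : α} (hx : x ≠ ⊥) (hy : y ∈ Q.parts)
    (hy' : y' ∈ Q.parts) (hxy : x ≤ y) (hxy' : x ≤ y') : y = y' :=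
  Q.disjoint.elim hy hy' fun h ↦ hx (le_bot_iff.mp (h hxy hxy'))

theorem notMem_left_of_mem_right {P : Finpartition a} {Q : Finpartition b} (h : Disjoint a b)
    {x : α} (hx : x ∈ Q.parts) : x ∉ P.parts := fun hxP ↦
  Q.ne_bot hx (le_bot_iff.mp (h (P.le hxP) (Q.le hx)))

variable [DecidableEq α]

theorem restrict_refines (P : Finpartition b) (h : a ≤ b) : (P.restrict h).Refines P := by
  intro x hx
  obtain ⟨y, hy, rfl⟩ := Finset.mem_image.mp (Finset.mem_of_mem_erase hx)
  exact ⟨y, hy, inf_le_left⟩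

def union (P : Finpartition a) (Q : Finpartition b) (h : Disjoint a b) :
    Finpartition (a ⊔ b) where
  parts := P.parts ∪ Q.parts
  supIndep := Finset.supIndep_iff_pairwiseDisjoint.mpr <| by
    rw [Finset.coe_union]
    exact P.disjoint.union Q.disjoint fun x hx y hy _ ↦ h.mono (P.le hx) (Q.le hy)
  sup_parts := by rw [Finset.sup_union, P.sup_parts, Q.sup_parts]
  bot_notMem := by simp [P.bot_notMem, Q.bot_notMem]

theorem refines_union_left (P : Finpartition a) (Q : Finpartition b) (h : Disjoint a b) :
    P.Refines (P.union Q h) :=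
  fun x hx ↦ ⟨x, Finset.mem_union_left _ hx, le_rfl⟩

theorem refines_union_right (P : Finpartition a) (Q : Finpartition b) (h : Disjoint a b) :
    Q.Refines (P.union Q h) :=
  fun x hx ↦ ⟨x, Finset.mem_union_right _ hx, le_rfl⟩

theorem union_le {P : Finpartition a} {Q : Finpartition b} {R : Finpartition (a ⊔ b)}
    (h : Disjoint a b) (hP : P.Refines R) (hQ : Q.Refines R) : P.union Q h ≤ R := by
  intro x hx
  rcases Finset.mem_union.mp hx with hx | hx
  exacts [hP hx, hQ hx]

theorem union_le_union {P P' : Finpartition a} {Q Q' : Finpartition b} (h : Disjoint a b)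
    (hP : P ≤ P') (hQ : Q ≤ Q') : P.union Q h ≤ P'.union Q' h :=
  union_le h ((refines_of_le hP).trans (refines_union_left P' Q' h))
    ((refines_of_le hQ).trans (refines_union_right P' Q' h))

end Finpartition

namespace ProfiniteCosheaves

section PartitionDiagram

variable {α : Type u} [DistribLattice α] [OrderBot α] {C : Type u₂} [Category.{v₂} C]
  [HasFiniteCoproducts C] (A B : α ⥤ C) {a b : α}

def partsCofan (P : Finpartition a) : Cofan fun x : P.parts ↦ A.obj x :=
  Cofan.mk (A.obj a) fun x ↦ A.map (homOfLE (P.le x.2))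

noncomputable def partsSigmaDesc (P : Finpartition a) :
    (∐ fun x : P.parts ↦ A.obj x) ⟶ A.obj a :=
  Sigma.desc fun x : P.parts ↦ A.map (homOfLE (P.le x.2))

theorem ι_partsSigmaDesc (P : Finpartition a) (x : P.parts) :
    Sigma.ι _ x ≫ partsSigmaDesc A P = A.map (homOfLE (P.le x.2)) :=
  Sigma.ι_desc _ _

/-- Sends the summand of a part `x` of `P` to the summand of the part of `Q` above `x`, which is
unique (`ι_partsSigmaMap`). -/
noncomputable def partsSigmaMap {P : Finpartition a} {Q : Finpartition b} (h : P.Refines Q) :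
    (∐ fun x : P.parts ↦ A.obj x) ⟶ ∐ fun y : Q.parts ↦ A.obj y :=
  Sigma.desc fun x : P.parts ↦ A.map (homOfLE (h x.2).choose_spec.2) ≫
    Sigma.ι (fun y : Q.parts ↦ A.obj y) ⟨_, (h x.2).choose_spec.1⟩

variable {A} in
theorem ι_partsSigmaMap {P : Finpartition a} {Q : Finpartition b} (h : P.Refines Q)
    (x : P.parts) {y : α} (hy : y ∈ Q.parts) (hxy : x.1 ≤ y) :
    Sigma.ι _ x ≫ partsSigmaMap A h =
      A.map (homOfLE hxy) ≫ Sigma.ι (fun y : Q.parts ↦ A.obj y) ⟨y, hy⟩ := by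
  obtain rfl : (h x.2).choose = y :=
    Q.eq_of_le_of_le (P.ne_bot x.2) (h x.2).choose_spec.1 hy (h x.2).choose_spec.2 hxy
  exact Sigma.ι_desc _ _

theorem partsSigmaMap_refl (P : Finpartition a) :
    partsSigmaMap A (Finpartition.refines_of_le le_rfl : P.Refines P) = 𝟙 _ := by
  ext x
  rw [ι_partsSigmaMap _ x x.2 le_rfl]
  simp

theorem partsSigmaMap_trans {c : α} {P : Finpartition a} {Q : Finpartition b}
    {R : Finpartition c} (hPQ : P.Refines Q) (hQR : Q.Refines R) :
    partsSigmaMap A hPQ ≫ partsSigmaMap A hQR = partsSigmaMap A (hPQ.trans hQR) := by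
  ext x
  obtain ⟨y, hy, hxy⟩ := hPQ x.2
  obtain ⟨z, hz, hyz⟩ := hQR hy
  rw [reassoc_of% ι_partsSigmaMap hPQ x hy hxy, ι_partsSigmaMap hQR ⟨y, hy⟩ hz hyz,
    ι_partsSigmaMap _ x hz (hxy.trans hyz), ← Category.assoc, ← A.map_comp]
  rfl

theorem partsSigmaMap_desc {P : Finpartition a} {Q : Finpartition b} (h : P.Refines Q) :
    partsSigmaMap A h ≫ partsSigmaDesc A Q = partsSigmaDesc A P ≫ A.map (homOfLE h.le) := by
  ext x
  obtain ⟨y, hy, hxy⟩ := h x.2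
  rw [reassoc_of% ι_partsSigmaMap h x hy hxy, ι_partsSigmaDesc, reassoc_of% ι_partsSigmaDesc,
    ← A.map_comp, ← A.map_comp]
  rfl

theorem partsSigmaDesc_ι {Q : Finpartition b} {x : α} (hx : x ∈ Q.parts) (P : Finpartition x) :
    partsSigmaDesc A P ≫ Sigma.ι (fun y : Q.parts ↦ A.obj y) ⟨x, hx⟩ =
      partsSigmaMap A (Finpartition.refines_of_mem_parts hx P) := by
  ext y
  rw [reassoc_of% ι_partsSigmaDesc, ι_partsSigmaMap _ y hx (P.le y.2)]

variable {A B} in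
theorem partsSigmaMap_naturality (φ : A ⟶ B) {P : Finpartition a} {Q : Finpartition b}
    (h : P.Refines Q) :
    partsSigmaMap A h ≫ Limits.Sigma.map (fun y : Q.parts ↦ φ.app y) =
      Limits.Sigma.map (fun x : P.parts ↦ φ.app x) ≫ partsSigmaMap B h := by
  ext x
  obtain ⟨y, hy, hxy⟩ := h x.2
  simp [reassoc_of% ι_partsSigmaMap h x hy hxy, ι_partsSigmaMap h x hy hxy]

variable {A B} in
theorem partsSigmaDesc_naturality (φ : A ⟶ B) (P : Finpartition a) :
    Limits.Sigma.map (fun x : P.parts ↦ φ.app x) ≫ partsSigmaDesc B P =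
      partsSigmaDesc A P ≫ φ.app a := by
  ext x
  simp [ι_partsSigmaDesc, reassoc_of% ι_partsSigmaDesc]

noncomputable abbrev partitionDiagram (a : α) : (α ⥤ C) ⥤ Finpartition a ⥤ C where
  obj A :=
    { obj P := ∐ fun x : P.parts ↦ A.obj x
      map f := partsSigmaMap A (Finpartition.refines_of_le (leOfHom f))
      map_id P := partsSigmaMap_refl A P
      map_comp f g := (partsSigmaMap_trans A (leOfHom f) (leOfHom g)).symm }
  map φ :=
    { app P := Limits.Sigma.map fun x : P.parts ↦ φ.app x
      naturality _ _ f := partsSigmaMap_naturality φ (leOfHom f) }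

end PartitionDiagram

section Cosheafify

variable {α : Type u} [DistribLattice α] [OrderBot α] [DecidableEq α] {C : Type u₂}
  [Category.{v₂} C] [HasFiniteCoproducts C] [HasLimitsOfSize.{u, u} C] (A : α ⥤ C) {a b : α}

theorem limit_π_partsSigmaMap (P P' : Finpartition a) {Q : Finpartition b} (h : P.Refines Q)
    (h' : P'.Refines Q) :
    limit.π ((partitionDiagram a).obj A) P ≫ partsSigmaMap A h =
      limit.π ((partitionDiagram a).obj A) P' ≫ partsSigmaMap A h' := by
  rw [← limit.w _ (homOfLE inf_le_left : P ⊓ P' ⟶ P),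
    ← limit.w _ (homOfLE inf_le_right : P ⊓ P' ⟶ P'), Category.assoc, Category.assoc,
    partsSigmaMap_trans, partsSigmaMap_trans]

theorem limit_π_partsSigmaDesc (P : Finpartition a) :
    limit.π ((partitionDiagram a).obj A) P ≫ partsSigmaDesc A P =
      limit.π ((partitionDiagram a).obj A) ⊤ ≫ partsSigmaDesc A ⊤ := by
  rw [← limit.w _ (homOfLE le_top : P ⟶ ⊤), Category.assoc, partsSigmaMap_desc]
  simp

noncomputable abbrev restrictionCone (h : a ≤ b) : Cone ((partitionDiagram b).obj A) where
  pt := limit ((partitionDiagram a).obj A)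
  π.app Q := limit.π _ (Q.restrict h) ≫ partsSigmaMap A (Q.restrict_refines h)
  π.naturality Q Q' f := by
    simp only [Functor.const_obj_obj, Functor.const_obj_map, Category.id_comp, Category.assoc,
      partsSigmaMap_trans]
    exact limit_π_partsSigmaMap A _ _ _ _

noncomputable abbrev cosheafifyObj : α ⥤ C where
  obj a := limit ((partitionDiagram a).obj A)
  map f := limit.lift _ (restrictionCone A (leOfHom f))
  map_id a := by
    ext Q
    simp only [limit.lift_π, Category.id_comp]
    rw [limit_π_partsSigmaMap A _ Q _ (Finpartition.refines_of_le le_rfl), partsSigmaMap_refl,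
      Category.comp_id]
  map_comp f g := by
    ext R
    simp only [limit.lift_π, Category.assoc, limit.lift_π_assoc, partsSigmaMap_trans]
    exact limit_π_partsSigmaMap A _ _ _ _

theorem cosheafifyObj_map_π (f : a ⟶ b) (Q : Finpartition b) (P : Finpartition a)
    (h : P.Refines Q) :
    (cosheafifyObj A).map f ≫ limit.π _ Q =
      limit.π ((partitionDiagram a).obj A) P ≫ partsSigmaMap A h :=
  (limit.lift_π _ _).trans (limit_π_partsSigmaMap A _ _ _ _)

variable (α C) in
noncomputable abbrev cosheafify : (α ⥤ C) ⥤ α ⥤ C where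
  obj := cosheafifyObj
  map φ :=
    { app a := lim.map ((partitionDiagram a).map φ)
      naturality a b f := by
        refine limit.hom_ext fun Q ↦ ?_
        simp only [Category.assoc, lim_map, limMap_π, limit.lift_π_assoc, limit.lift_π,
          limMap_π_assoc]
        rw [partsSigmaMap_naturality] }
  map_id A := NatTrans.ext <| funext fun a ↦ ((partitionDiagram a ⋙ lim).map_id A)
  map_comp φ ψ := NatTrans.ext <| funext fun a ↦ ((partitionDiagram a ⋙ lim).map_comp φ ψ)

variable (α C) in
@[simps]
noncomputable def cosheafifyCounit : cosheafify α C ⟶ 𝟭 (α ⥤ C) where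
  app A :=
    { app a := limit.π ((partitionDiagram a).obj A) ⊤ ≫ partsSigmaDesc A ⊤
      naturality a b f := by
        have h := (⊤ : Finpartition b).restrict_refines (leOfHom f)
        dsimp only [Functor.id_obj, Functor.id_map]
        rw [← Category.assoc, cosheafifyObj_map_π A f ⊤ _ h, Category.assoc,
          partsSigmaMap_desc, ← Category.assoc, limit_π_partsSigmaDesc, Category.assoc]
        exact (Category.assoc _ _ _).symm }
  naturality A B φ := by
    ext a
    simp [partsSigmaDesc_naturality]

theorem partsSigmaDesc_cosheafifyObj_π (Q : Finpartition a) :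
    partsSigmaDesc (cosheafifyObj A) Q ≫ limit.π ((partitionDiagram a).obj A) Q =
      Limits.Sigma.map fun x : Q.parts ↦ ((cosheafifyCounit α C).app A).app x := by
  ext x
  rw [reassoc_of% ι_partsSigmaDesc, cosheafifyObj_map_π A _ Q ⊤
    (Finpartition.refines_of_mem_parts x.2 ⊤), Sigma.ι_map, cosheafifyCounit_app_app,
    Category.assoc]
  exact congrArg _ (partsSigmaDesc_ι A x.2 ⊤).symm

theorem cosheafify_map_counit_app :
    (cosheafify α C).map ((cosheafifyCounit α C).app A) =
      (cosheafifyCounit α C).app ((cosheafify α C).obj A) := by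
  ext a Q
  dsimp only [Functor.id_obj]
  rw [cosheafifyCounit_app_app, ← limit_π_partsSigmaDesc _ Q, Category.assoc,
    partsSigmaDesc_cosheafifyObj_π]
  exact limMap_π _ _

theorem cosheafify_map_comp_counit_app {B : α ⥤ C} (g : B ⟶ (cosheafify α C).obj A) :
    (cosheafify α C).map (g ≫ (cosheafifyCounit α C).app A) =
      (cosheafifyCounit α C).app B ≫ g := by
  rw [Functor.map_comp, cosheafify_map_counit_app]
  exact (cosheafifyCounit α C).naturality g

theorem inv_cosheafifyCounit_app_comp_map {B : α ⥤ C} [IsIso ((cosheafifyCounit α C).app B)]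
    (g : B ⟶ (cosheafify α C).obj A) :
    inv ((cosheafifyCounit α C).app B) ≫
      (cosheafify α C).map (g ≫ (cosheafifyCounit α C).app A) = g := by
  rw [cosheafify_map_comp_counit_app, IsIso.inv_hom_id_assoc]

theorem inv_cosheafifyCounit_app_comp_map_comp {B : α ⥤ C}
    [IsIso ((cosheafifyCounit α C).app B)] (f : B ⟶ A) :
    (inv ((cosheafifyCounit α C).app B) ≫ (cosheafify α C).map f) ≫
      (cosheafifyCounit α C).app A = f := by
  rw [Category.assoc, (cosheafifyCounit α C).naturality f, IsIso.inv_hom_id_assoc]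
  rfl

noncomputable def isInitialCosheafifyObjBot : IsInitial ((cosheafifyObj A).obj ⊥) :=
  let P : Finpartition (⊥ : α) := default
  have : IsEmpty P.parts := Finset.isEmpty_coe_sort.mpr (Finpartition.parts_eq_empty_iff.mpr rfl)
  have : IsIso (limit.π ((partitionDiagram ⊥).obj A) P) := isIso_π_of_isInitial
    (IsInitial.ofUniqueHom (fun _ ↦ eqToHom (Subsingleton.elim _ _))
      fun _ _ ↦ Subsingleton.elim _ _) _
  (isColimitEquivIsInitialOfIsEmpty C _ (colimit.isColimit _)).ofIso
    (asIso (limit.π ((partitionDiagram ⊥).obj A) P)).symm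

end Cosheafify

section Binary

variable {α : Type u} [DistribLattice α] [OrderBot α] [DecidableEq α]

abbrev unionFunctor {a b : α} (h : Disjoint a b) :
    Finpartition a × Finpartition b ⥤ Finpartition (a ⊔ b) where
  obj p := p.1.union p.2 h
  map f := homOfLE (Finpartition.union_le_union h (leOfHom f.1) (leOfHom f.2))

instance {a b : α} (h : Disjoint a b) : (unionFunctor h).Initial :=
  Functor.initial_of_exists_of_isCofiltered _
    (fun R ↦ ⟨(R.restrict le_sup_left, R.restrict le_sup_right), ⟨homOfLE <| Finpartition.union_le h
      (R.restrict_refines le_sup_left) (R.restrict_refines le_sup_right)⟩⟩)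
    fun _ _ ↦ ⟨_, 𝟙 _, Subsingleton.elim _ _⟩

variable {C : Type u₂} [Category.{v₂} C] [HasFiniteCoproducts C] (A : α ⥤ C) {a b : α}

variable (a b) in
noncomputable abbrev pairDiagram :
    Finpartition a × Finpartition b ⥤ Discrete WalkingPair ⥤ C where
  obj p := pair (((partitionDiagram a).obj A).obj p.1) (((partitionDiagram b).obj A).obj p.2)
  map f := mapPair (((partitionDiagram a).obj A).map f.1) (((partitionDiagram b).obj A).map f.2)
  map_id p := by
    ext ⟨⟨⟩⟩
    exacts [((partitionDiagram a).obj A).map_id p.1, ((partitionDiagram b).obj A).map_id p.2]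
  map_comp f g := by
    ext ⟨⟨⟩⟩
    exacts [((partitionDiagram a).obj A).map_comp f.1 g.1,
      ((partitionDiagram b).obj A).map_comp f.2 g.2]

noncomputable def coprodPartsSigmaIso (h : Disjoint a b) (P : Finpartition a)
    (Q : Finpartition b) :
    ((∐ fun x : P.parts ↦ A.obj x) ⨿ ∐ fun y : Q.parts ↦ A.obj y) ≅
      ∐ fun z : (P.union Q h).parts ↦ A.obj z where
  hom := coprod.desc (partsSigmaMap A (P.refines_union_left Q h))
    (partsSigmaMap A (P.refines_union_right Q h))
  inv := Sigma.desc fun z ↦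
    if hz : z.1 ∈ P.parts then Sigma.ι (fun x : P.parts ↦ A.obj x) ⟨z, hz⟩ ≫ coprod.inl
    else
      Sigma.ι (fun y : Q.parts ↦ A.obj y) ⟨z, (Finset.mem_union.mp z.2).resolve_left hz⟩ ≫
        coprod.inr
  hom_inv_id := by
    ext x
    · rw [coprod.inl_desc_assoc,
        reassoc_of% ι_partsSigmaMap _ x (Finset.mem_union_left _ x.2) le_rfl]
      simp [x.2]
    · rw [coprod.inr_desc_assoc,
        reassoc_of% ι_partsSigmaMap _ x (Finset.mem_union_right _ x.2) le_rfl]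
      simp [Finpartition.notMem_left_of_mem_right h x.2]
  inv_hom_id := by
    ext ⟨z, hz⟩
    by_cases hzP : z ∈ P.parts
    · simp only [colimit.ι_desc_assoc, Cofan.mk_ι_app, hzP, dite_true, Category.assoc]
      rw [coprod.inl_desc, ι_partsSigmaMap _ ⟨z, hzP⟩ hz le_rfl]
      simp
    · simp only [colimit.ι_desc_assoc, Cofan.mk_ι_app, hzP, dite_false, Category.assoc]
      rw [coprod.inr_desc, ι_partsSigmaMap _ _ hz le_rfl]
      simp

noncomputable def pairDiagramCompColimIso (h : Disjoint a b) :
    pairDiagram A a b ⋙ colim ≅ unionFunctor h ⋙ (partitionDiagram (a ⊔ b)).obj A :=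
  NatIso.ofComponents (fun p ↦ coprodPartsSigmaIso A h p.1 p.2) fun {p q} f ↦ by
    apply coprod.hom_ext
    · change coprod.inl ≫ coprod.map _ _ ≫ _ = _
      rw [coprod.inl_map_assoc]
      dsimp only [coprodPartsSigmaIso]
      rw [coprod.inl_desc, coprod.inl_desc_assoc, partsSigmaMap_trans]
      exact (partsSigmaMap_trans A _
        (Finpartition.refines_of_le (leOfHom ((unionFunctor h).map f)))).symm
    · change coprod.inr ≫ coprod.map _ _ ≫ _ = _
      rw [coprod.inr_map_assoc]
      dsimp only [coprodPartsSigmaIso]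
      rw [coprod.inr_desc, coprod.inr_desc_assoc, partsSigmaMap_trans]
      exact (partsSigmaMap_trans A _
        (Finpartition.refines_of_le (leOfHom ((unionFunctor h).map f)))).symm

variable [HasLimitsOfSize.{u, u} C]

variable (a b) in
noncomputable abbrev pairCone : Cone (pairDiagram A a b) where
  pt := pair (limit ((partitionDiagram a).obj A)) (limit ((partitionDiagram b).obj A))
  π.app p := mapPair (limit.π _ p.1) (limit.π _ p.2)
  π.naturality p q f := by
    ext ⟨⟨⟩⟩
    exacts [(Category.id_comp _).trans (limit.w _ f.1).symm,
      (Category.id_comp _).trans (limit.w _ f.2).symm]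

variable (a b) in
noncomputable def isLimitPairCone : IsLimit (pairCone A a b) :=
  evaluationJointlyReflectsLimits _ fun
    | ⟨.left⟩ => (Functor.Initial.isLimitWhiskerEquiv (CategoryTheory.Prod.fst _ _) _).symm
        (limit.isLimit _)
    | ⟨.right⟩ => (Functor.Initial.isLimitWhiskerEquiv (CategoryTheory.Prod.snd _ _) _).symm
        (limit.isLimit _)

/-- `lim_P ∐_P A ⨿ lim_Q ∐_Q A ≅ lim_{(P, Q)} (∐_P A ⨿ ∐_Q A) ≅ lim_{(P, Q)} ∐_{P ∪ Q} A`, which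
is `lim_R ∐_R A` over the partitions `R` of `a ⊔ b` because `unionFunctor h` is initial. -/
theorem isIso_coprodDesc_cosheafifyObj (h : Disjoint a b)
    [PreservesLimitsOfShape (Finpartition a × Finpartition b)
      (colim : (Discrete WalkingPair ⥤ C) ⥤ C)] :
    IsIso (coprod.desc ((cosheafifyObj A).map (homOfLE le_sup_left : a ⟶ a ⊔ b))
      ((cosheafifyObj A).map (homOfLE le_sup_right : b ⟶ a ⊔ b))) := by
  let c₁ := (Cone.postcompose (pairDiagramCompColimIso A h).hom).obj
    (colim.mapCone (pairCone A a b))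
  have h₁ : IsLimit c₁ := (IsLimit.postcomposeHomEquiv _ _).symm
    (isLimitOfPreserves colim (isLimitPairCone A a b))
  have h₂ :
      IsLimit ((limit.cone ((partitionDiagram (a ⊔ b)).obj A)).whisker (unionFunctor h)) :=
    (Functor.Initial.isLimitWhiskerEquiv (unionFunctor h) _).symm (limit.isLimit _)
  let f : c₁ ⟶ (limit.cone _).whisker (unionFunctor h) :=
    { hom := coprod.desc ((cosheafifyObj A).map (homOfLE le_sup_left : a ⟶ a ⊔ b))
        ((cosheafifyObj A).map (homOfLE le_sup_right : b ⟶ a ⊔ b))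
      w := fun p ↦ by
        apply coprod.hom_ext
        · rw [coprod.inl_desc_assoc]
          refine (cosheafifyObj_map_π A _ _ p.1 (p.1.refines_union_left p.2 h)).trans ?_
          change _ = coprod.inl ≫ coprod.map _ _ ≫ coprod.desc _ _
          rw [coprod.inl_map_assoc, coprod.inl_desc]
        · rw [coprod.inr_desc_assoc]
          refine (cosheafifyObj_map_π A _ _ p.2 (p.1.refines_union_right p.2 h)).trans ?_
          change _ = coprod.inr ≫ coprod.map _ _ ≫ coprod.desc _ _
          rw [coprod.inr_map_assoc, coprod.inr_desc] }
  have := IsLimit.hom_isIso h₁ h₂ f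
  exact (Cone.forget _).map_isIso f

end Binary

section Preservation

variable {α : Type u} [DistribLattice α] [OrderBot α] [DecidableEq α] {C : Type u₂}
  [Category.{v₂} C] [HasFiniteCoproducts C] (J : Type*) [Category J] [HasColimitsOfShape J C]

instance (a : α) : PreservesColimitsOfShape J (partitionDiagram (C := C) a) := by
  refine preservesColimitsOfShape_of_evaluation _ _ fun P ↦ ?_
  let e : (Functor.whiskeringLeft _ _ C).obj (Discrete.functor fun x : P.parts ↦ (x : α)) ⋙
      colim ≅ partitionDiagram a ⋙ (evaluation _ C).obj P :=
    NatIso.ofComponents (fun A ↦ HasColimit.isoOfNatIso (Discrete.natIso fun _ ↦ Iso.refl _))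
      fun φ ↦ colimit.hom_ext fun ⟨x⟩ ↦ by simp
  exact preservesColimitsOfShape_of_natIso e

variable [HasLimitsOfSize.{u, u} C]

theorem preservesColimitsOfShape_cosheafify
    [∀ a : α, PreservesColimitsOfShape J (lim : (Finpartition a ⥤ C) ⥤ C)] :
    PreservesColimitsOfShape J (cosheafify α C) :=
  preservesColimitsOfShape_of_evaluation _ _ fun a ↦
    inferInstanceAs (PreservesColimitsOfShape J (partitionDiagram a ⋙ lim))

end Preservation

section Additivity

variable {Y : Type u} [TopologicalSpace Y] {C : Type u₂} [Category.{v₂} C] {B : Clopens Y ⥤ C}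

theorem IsCosheaf.nonempty_isColimit_cofan_insert [DecidableEq (Clopens Y)] (hB : IsCosheaf B)
    {c : Clopens Y} {t : Finset (Clopens Y)} (hct : Disjoint c (t.sup id))
    (ht : IsColimit (Cofan.mk (B.obj (t.sup id)) fun x : t ↦
      B.map (homOfLE (Finset.le_sup (f := id) x.2))))
    (hle : ∀ x ∈ insert c t, x ≤ c ⊔ t.sup id) :
    Nonempty (IsColimit (Cofan.mk (B.obj (c ⊔ t.sup id)) fun x : ↥(insert c t) ↦
      B.map (homOfLE (hle x x.2)))) := by
  obtain ⟨hbin⟩ := hB.binary c (t.sup id) hct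
  let restrictCofan (s : Cofan fun x : ↥(insert c t) ↦ B.obj x) : Cofan fun x : t ↦ B.obj x :=
    Cofan.mk s.pt fun x ↦ s.inj ⟨x, Finset.mem_insert_of_mem x.2⟩
  let desc (s : Cofan fun x : ↥(insert c t) ↦ B.obj x) : B.obj (c ⊔ t.sup id) ⟶ s.pt :=
    hbin.desc <|
      BinaryCofan.mk (s.inj ⟨c, Finset.mem_insert_self c t⟩) (ht.desc (restrictCofan s))
  have inr_desc (s : Cofan fun x : ↥(insert c t) ↦ B.obj x) :
      B.map (homOfLE le_sup_right) ≫ desc s = ht.desc (restrictCofan s) :=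
    hbin.fac _ ⟨.right⟩
  refine ⟨Cofan.IsColimit.mk _ desc ?_ ?_⟩
  · rintro s ⟨x, hx⟩
    rcases Finset.mem_insert.mp hx with rfl | hx
    · exact hbin.fac _ ⟨.left⟩
    · refine (B.map_comp_assoc (homOfLE (Finset.le_sup (f := id) hx)) (homOfLE le_sup_right)
        _).trans ?_
      rw [inr_desc]
      exact ht.fac _ ⟨⟨x, hx⟩⟩
  · intro s m hm
    refine BinaryCofan.IsColimit.hom_ext hbin ?_ ?_
    · exact (hm ⟨c, Finset.mem_insert_self c t⟩).trans
        (hbin.fac (BinaryCofan.mk _ _) ⟨.left⟩).symm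
    · refine Cofan.IsColimit.hom_ext ht _ _ fun x ↦ ?_
      calc _ = s.inj ⟨x, Finset.mem_insert_of_mem x.2⟩ :=
            (B.map_comp_assoc _ _ m).symm.trans (hm _)
        _ = _ := (ht.fac (restrictCofan s) ⟨x⟩).symm.trans (congrArg _ (inr_desc s).symm)

theorem IsCosheaf.nonempty_isColimit_cofan (hB : IsCosheaf B) {s : Finset (Clopens Y)}
    (hs : (s : Set (Clopens Y)).PairwiseDisjoint id) {a : Clopens Y} (ha : s.sup id = a)
    (hle : ∀ x ∈ s, x ≤ a) :
    Nonempty (IsColimit (Cofan.mk (B.obj a) fun x : s ↦ B.map (homOfLE (hle x x.2)))) := by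
  classical
  induction s using Finset.induction_on generalizing a with
  | empty =>
    rw [Finset.sup_empty] at ha
    subst ha
    obtain ⟨hi⟩ := hB.initial
    exact ⟨Cofan.IsColimit.mk _ (fun t ↦ hi.to t.pt)
      (fun _ x ↦ (Finset.notMem_empty _ x.2).elim) fun _ _ _ ↦ hi.hom_ext _ _⟩
  | insert c t hc ih =>
    rw [Finset.sup_insert] at ha
    subst ha
    have hct : Disjoint c (t.sup id) := Finset.disjoint_sup_right.mpr fun x hx ↦
      hs (Finset.mem_insert_self c t) (Finset.mem_insert_of_mem hx) fun h ↦ hc (h ▸ hx)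
    obtain ⟨ht⟩ := ih (hs.subset (Finset.subset_insert c t)) rfl
      fun x hx ↦ Finset.le_sup (f := id) hx
    exact hB.nonempty_isColimit_cofan_insert hct ht hle

variable [HasFiniteCoproducts C]

theorem IsCosheaf.isIso_partsSigmaDesc (hB : IsCosheaf B) {a : Clopens Y} (P : Finpartition a) :
    IsIso (partsSigmaDesc B P) :=
  (Cofan.nonempty_isColimit_iff_isIso_sigmaDesc (partsCofan B P)).mp
    (hB.nonempty_isColimit_cofan P.disjoint P.sup_parts fun _ hx ↦ P.le hx)

variable [DecidableEq (Clopens Y)] [HasLimitsOfSize.{u, u} C]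

theorem IsCosheaf.isIso_limit_π_partsSigmaDesc (hB : IsCosheaf B) (a : Clopens Y) :
    IsIso (limit.π ((partitionDiagram a).obj B) ⊤ ≫ partsSigmaDesc B ⊤) := by
  have := hB.isIso_partsSigmaDesc (a := a)
  let c : Cone ((partitionDiagram a).obj B) :=
    { pt := B.obj a
      π.app P := inv (partsSigmaDesc B P)
      π.naturality P Q f := by
        dsimp only [Functor.const_obj_obj, Functor.const_obj_map]
        rw [Category.id_comp, IsIso.eq_inv_comp, IsIso.comp_inv_eq, partsSigmaMap_desc]
        simp }
  refine ⟨limit.lift _ c, ?_, ?_⟩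
  · ext P
    simp only [Category.assoc, limit.lift_π, Category.id_comp]
    rw [← Category.assoc, ← limit_π_partsSigmaDesc B P, Category.assoc]
    simp [c]
  · simp [c]

theorem IsCosheaf.isIso_cosheafifyCounit_app (hB : IsCosheaf B) :
    IsIso ((cosheafifyCounit (Clopens Y) C).app B) :=
  have (a : Clopens Y) : IsIso (((cosheafifyCounit (Clopens Y) C).app B).app a) :=
    hB.isIso_limit_π_partsSigmaDesc a
  NatIso.isIso_of_isIso_app _

end Additivity

section Cosheafification

variable {Y : Type u} [TopologicalSpace Y] [DecidableEq (Clopens Y)] {C : Type u₂}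
  [Category.{v₂} C] [HasFiniteCoproducts C] [HasLimitsOfSize.{u, u} C]

theorem isCosheaf_cosheafifyObj
    (hC : ∀ (K : Type u) [SmallCategory K] [IsCofiltered K],
      PreservesLimitsOfShape K (colim : (Discrete WalkingPair ⥤ C) ⥤ C))
    (A : Clopens Y ⥤ C) : IsCosheaf (cosheafifyObj A) where
  initial := ⟨isInitialCosheafifyObjBot A⟩
  binary U V h :=
    have := hC (Finpartition U × Finpartition V)
    (colimit.isColimit _).nonempty_isColimit_iff_isIso_desc.mpr
      (isIso_coprodDesc_cosheafifyObj A h)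

instance (B : ObjectProperty.FullSubcategory fun A : Clopens Y ⥤ C ↦ IsCosheaf A) :
    IsIso ((cosheafifyCounit (Clopens Y) C).app B.obj) :=
  B.property.isIso_cosheafifyCounit_app

variable (Y) (hC : ∀ (K : Type u) [SmallCategory K] [IsCofiltered K],
  PreservesLimitsOfShape K (colim : (Discrete WalkingPair ⥤ C) ⥤ C))

noncomputable abbrev cosheafification :
    (Clopens Y ⥤ C) ⥤ ObjectProperty.FullSubcategory fun A : Clopens Y ⥤ C ↦ IsCosheaf A :=
  ObjectProperty.lift _ (cosheafify (Clopens Y) C) (isCosheaf_cosheafifyObj hC)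

noncomputable def cosheafificationAdjunction :
    ObjectProperty.ι (fun A : Clopens Y ⥤ C ↦ IsCosheaf A) ⊣ cosheafification Y hC :=
  Adjunction.mkOfHomEquiv
    { homEquiv B A :=
        { toFun f := ObjectProperty.homMk
            (inv ((cosheafifyCounit _ C).app B.obj) ≫ (cosheafify _ C).map f)
          invFun g := g.hom ≫ (cosheafifyCounit _ C).app A
          left_inv f := inv_cosheafifyCounit_app_comp_map_comp (B := B.obj) _ f
          right_inv g := ObjectProperty.hom_ext _ (inv_cosheafifyCounit_app_comp_map _ g.hom) }
      homEquiv_naturality_left_symm f g := Category.assoc f.hom g.hom _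
      homEquiv_naturality_right f g := ObjectProperty.hom_ext _ <|
        (congrArg _ ((cosheafify _ C).map_comp f g)).trans (Category.assoc _ _ _).symm }

theorem preservesColimitsOfShape_cosheafification (J : Type*) [Category J]
    [HasColimitsOfShape J C]
    [∀ a : Clopens Y, PreservesColimitsOfShape J (lim : (Finpartition a ⥤ C) ⥤ C)] :
    PreservesColimitsOfShape J (cosheafification Y hC) :=
  have : PreservesColimitsOfShape J (cosheafification Y hC ⋙ ObjectProperty.ι _) :=
    preservesColimitsOfShape_cosheafify J
  preservesColimitsOfShape_of_reflects_of_preserves _ (ObjectProperty.ι _)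

end Cosheafification

/-- **Statement 8.** If `C` has all limits and finite colimits, and cofiltered limits commute
with finite colimits in `C`, then the cosheafification functor (any right adjoint of the
inclusion of cosheaves into precosheaves) is exact: it preserves all limits and all finite
colimits. -/
theorem cosheafification_exact (C : Type u₂) [Category.{u} C] [HasLimits C]
    [HasFiniteColimits C] (hcomm : CofilteredLimitsCommuteWithFiniteColimits.{u} C)
    (X : Profinite.{u}) (R : (Clopens X ⥤ C) ⥤ CoSheaf X C)
    (adj : ObjectProperty.ι (fun A : Clopens X ⥤ C => IsCosheaf A) ⊣ R) :
    PreservesLimitsOfSize.{u, u} R ∧ PreservesFiniteColimits R := by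
  classical
  refine ⟨adj.rightAdjoint_preservesLimits, ⟨fun J _ _ ↦ ?_⟩⟩
  have hC (K : Type u) [SmallCategory K] [IsCofiltered K] :
      PreservesLimitsOfShape K (colim : (Discrete WalkingPair ⥤ C) ⥤ C) :=
    hcomm _ K
  have (a : Clopens X) : PreservesColimitsOfShape J (lim : (Finpartition a ⥤ C) ⥤ C) :=
    have := hcomm J (Finpartition a)
    preservesColimitsOfShape_lim_of_preservesLimitsOfShape_colim
  have := preservesColimitsOfShape_cosheafification X hC J
  exact (preservesColimitsOfShape_of_natIso (J := J)
    (adj.rightAdjointUniq (cosheafificationAdjunction X hC)).symm :)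

end ProfiniteCosheaves
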